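/- arXiv:2111.11522 — 4 statements merged into one kernel-verified Lean document; each statement's English description precedes it below -/
import Mathlib

section
/- For a finite block B of positive integers of length n, the denominators of B and its reversal satisfy q_i(B)·q_{n−i}(B*) + q_{i−1}(B)·q_{n−i−1}(B*) = q(B) for all 0 ≤ i ≤ n. -/
/-- The value `[0; a₁, …, aₙ]` of a finite block of positive integer CF digits. -/
def cfVal : List ℕ+ → ℚ
  | [] => 0
  | a :: t => 1 / (((a : ℕ) : ℚ) + cfVal t)

/-- `qI B i = q_i(B)`: the denominator in lowest terms of the `i`-th convergent
`[0; a₁, …, a_i]` of the block `B`. -/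
def qI (B : List ℕ+) (i : ℕ) : ℕ := (cfVal (B.take i)).den

/-- `qm B i = q_{i-1}(B)`, with the convention `q₋₁ = 0`. -/
def qm (B : List ℕ+) : ℕ → ℕ
  | 0 => 0
  | i + 1 => qI B i

/-!
The continuant matrix `M(B) = ∏ [[aⱼ, 1], [1, 0]]` has first column `(q(B), p(B))`, where
`p(B)/q(B) = [0; B]` in lowest terms, and second column `(q_{n-1}(B), p_{n-1}(B))`.
Reversing `B` transposes `M(B)`, and `M(B) = M(B.take i) * M(B.drop i)`; the `(0,0)` entry of
this product is the claimed identity.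
-/

def cfMatrix (L : List ℕ+) : Matrix (Fin 2) (Fin 2) ℕ :=
  (L.map fun a => !![(a : ℕ), 1; 1, 0]).prod

@[simp] lemma cfMatrix_nil : cfMatrix [] = 1 := rfl

lemma cfMatrix_cons (a : ℕ+) (t : List ℕ+) :
    cfMatrix (a :: t) = !![(a : ℕ), 1; 1, 0] * cfMatrix t := by
  simp [cfMatrix]

lemma cfMatrix_append (X Y : List ℕ+) : cfMatrix (X ++ Y) = cfMatrix X * cfMatrix Y := by
  simp [cfMatrix]

lemma cfMatrix_cons_apply_zero_zero (a : ℕ+) (t : List ℕ+) :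
    cfMatrix (a :: t) 0 0 = a * cfMatrix t 0 0 + cfMatrix t 1 0 := by
  simp [cfMatrix_cons, Matrix.mul_apply]

lemma cfMatrix_cons_apply_one_zero (a : ℕ+) (t : List ℕ+) :
    cfMatrix (a :: t) 1 0 = cfMatrix t 0 0 := by
  simp [cfMatrix_cons, Matrix.mul_apply]

lemma cfMatrix_reverse (L : List ℕ+) : cfMatrix L.reverse = (cfMatrix L).transpose := by
  induction L with
  | nil => simp
  | cons a t ih =>
    have hsingle : cfMatrix [a] = (!![(a : ℕ), 1; 1, 0]).transpose := by
      ext i j; fin_cases i <;> fin_cases j <;> simp [cfMatrix]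
    rw [List.reverse_cons, cfMatrix_append, ih, hsingle, ← Matrix.transpose_mul, ← cfMatrix_cons]

lemma cfMatrix_concat_apply_zero_one (L : List ℕ+) (a : ℕ+) :
    cfMatrix (L ++ [a]) 0 1 = cfMatrix L 0 0 := by
  simp [cfMatrix, Matrix.mul_apply]

lemma cfMatrix_apply_zero_zero_pos (L : List ℕ+) : 0 < cfMatrix L 0 0 := by
  induction L with
  | nil => simp
  | cons a t ih =>
    rw [cfMatrix_cons_apply_zero_zero]
    exact Nat.add_pos_left (Nat.mul_pos a.pos ih) _

lemma coprime_cfMatrix_apply (L : List ℕ+) : Nat.Coprime (cfMatrix L 1 0) (cfMatrix L 0 0) := by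
  induction L with
  | nil => simp
  | cons a t ih =>
    rw [cfMatrix_cons_apply_zero_zero, cfMatrix_cons_apply_one_zero]
    exact ((Nat.coprime_mul_right_add_left _ _ _).2 ih).symm

lemma cfVal_eq_div (L : List ℕ+) : cfVal L = (cfMatrix L 1 0 : ℚ) / cfMatrix L 0 0 := by
  induction L with
  | nil => simp [cfVal]
  | cons a t ih =>
    have hq : (cfMatrix t 0 0 : ℚ) ≠ 0 := by exact_mod_cast (cfMatrix_apply_zero_zero_pos t).ne'
    rw [cfMatrix_cons_apply_zero_zero, cfMatrix_cons_apply_one_zero, cfVal, ih, add_div' _ _ _ hq,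
      one_div_div]
    push_cast
    ring

lemma cfVal_den (L : List ℕ+) : (cfVal L).den = cfMatrix L 0 0 := by
  have h := Rat.den_div_eq_of_coprime (a := cfMatrix L 1 0) (b := cfMatrix L 0 0)
    (by exact_mod_cast cfMatrix_apply_zero_zero_pos L) (coprime_cfMatrix_apply L)
  push_cast at h
  rw [cfVal_eq_div]
  exact_mod_cast h

lemma qI_eq_cfMatrix (B : List ℕ+) (i : ℕ) : qI B i = cfMatrix (B.take i) 0 0 :=
  cfVal_den _

lemma qm_eq_cfMatrix (B : List ℕ+) {i : ℕ} (h : i ≤ B.length) :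
    qm B i = cfMatrix (B.take i) 0 1 := by
  cases i with
  | zero => simp [qm]
  | succ j =>
    rw [qm, qI_eq_cfMatrix, ← List.take_concat_get' B j h,
      cfMatrix_concat_apply_zero_one]

/-- For a block `B` of length `n` with reversal `B*`:
`q_i(B)·q_{n−i}(B*) + q_{i−1}(B)·q_{n−i−1}(B*) = q(B)` for all `0 ≤ i ≤ n`. -/
theorem cf_reversal_denominator_identity (B : List ℕ+) :
    ∀ i ≤ B.length,
      qI B i * qI B.reverse (B.length - i) + qm B i * qm B.reverse (B.length - i)
        = qI B B.length := by
  intro i hi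
  have htake_reverse : B.reverse.take (B.length - i) = (B.drop i).reverse := by
    rw [List.take_reverse, Nat.sub_sub_self hi]
  have hsplit : cfMatrix B = cfMatrix (B.take i) * cfMatrix (B.drop i) := by
    rw [← cfMatrix_append, List.take_append_drop]
  rw [qI_eq_cfMatrix, qI_eq_cfMatrix, qI_eq_cfMatrix, qm_eq_cfMatrix B hi,
    qm_eq_cfMatrix B.reverse (by simp), htake_reverse, cfMatrix_reverse, List.take_length,
    hsplit, Matrix.mul_apply, Fin.sum_univ_two, Matrix.transpose_apply, Matrix.transpose_apply]
end

section
/- Let B be a block of positive integers and suppose integers b ≥ 2 and m ≥ 1 satisfy q(B)/b ≤ m² < q(B). Let B_1 be the longest prefix of B with q(B_1) ≤ m and B_2 the suffix of B such that B_2* is the longest prefix of B* with denominator at most m. Then −4⌈(1/2)log₂ b⌉ − 5 ≤ |B_1| + |B_2| − |B| ≤ 1. -/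
namespace CFSplit

/-- The digit matrix. -/
def M (a : ℕ+) : Matrix (Fin 2) (Fin 2) ℕ := !![(a : ℕ), 1; 1, 0]

/-- Product of digit matrices. -/
def P (L : List ℕ+) : Matrix (Fin 2) (Fin 2) ℕ := (L.map M).prod

/-- The continuant (denominator of `[0;L]`). -/
def K (L : List ℕ+) : ℕ := P L 0 0

/-- The numerator of `[0;L]`. -/
def h (L : List ℕ+) : ℕ := P L 1 0

@[simp] lemma P_nil : P [] = 1 := rfl

lemma P_cons (a : ℕ+) (t : List ℕ+) : P (a :: t) = M a * P t := by
  simp [P, List.prod_cons]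

lemma P_append (X Y : List ℕ+) : P (X ++ Y) = P X * P Y := by
  simp [P, List.prod_append]

@[simp] lemma K_nil : K [] = 1 := rfl
@[simp] lemma h_nil : h [] = 0 := rfl

lemma K_cons (a : ℕ+) (t : List ℕ+) : K (a :: t) = (a : ℕ) * K t + h t := by
  simp [K, h, P_cons, Matrix.mul_apply, Fin.sum_univ_two, M]

lemma h_cons (a : ℕ+) (t : List ℕ+) : h (a :: t) = K t := by
  simp [K, h, P_cons, Matrix.mul_apply, Fin.sum_univ_two, M]

lemma K_pos (L : List ℕ+) : 0 < K L := by
  induction L with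
  | nil => simp
  | cons a t ih =>
    rw [K_cons]
    have := a.one_le
    positivity

lemma coprime_h_K (L : List ℕ+) : Nat.Coprime (h L) (K L) := by
  induction L with
  | nil => simp [Nat.Coprime]
  | cons a t ih =>
    rw [K_cons, h_cons]
    have := (Nat.coprime_add_mul_right_right (K t) (h t) (a : ℕ)).mpr (Nat.coprime_comm.mp ih)
    have heq : h t + (a : ℕ) * K t = (a : ℕ) * K t + h t := by ring
    rwa [heq] at this

lemma cfVal_eq (L : List ℕ+) : cfVal L = (h L : ℚ) / (K L : ℚ) := by
  induction L with
  | nil => simp [cfVal]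
  | cons a t ih =>
    have hK : (0 : ℚ) < (K t : ℚ) := by exact_mod_cast K_pos t
    have hK' : (0 : ℚ) < (a : ℕ) * (K t : ℚ) + (h t : ℚ) := by
      have := a.one_le
      have : (1 : ℚ) ≤ ((a : ℕ) : ℚ) := by exact_mod_cast this
      nlinarith
    rw [cfVal, ih, K_cons, h_cons]
    push_cast
    rw [eq_div_iff hK'.ne', one_div, inv_mul_eq_div, div_eq_iff (by positivity)]
    field_simp

lemma den_eq (L : List ℕ+) : (cfVal L).den = K L := by
  have := Rat.den_div_eq_of_coprime (a := (h L : ℤ)) (b := (K L : ℤ))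
    (by exact_mod_cast K_pos L) (by simpa using coprime_h_K L)
  have h2 : ((h L : ℤ) : ℚ) / ((K L : ℤ) : ℚ) = cfVal L := by
    rw [cfVal_eq]; push_cast; ring
  rw [h2] at this
  exact_mod_cast this

lemma qI_eq (B : List ℕ+) (i : ℕ) : qI B i = K (B.take i) := den_eq _

lemma K_reverse (L : List ℕ+) : K L.reverse = K L := by
  have hP : ∀ L : List ℕ+, P L.reverse = (P L).transpose := by
    intro L
    induction L with
    | nil => simp [Matrix.transpose_one]
    | cons a t ih =>
      have hMa : (M a).transpose = M a := by
        ext i j; fin_cases i <;> fin_cases j <;> simp [M]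
      have hPa : P [a] = M a := by simp [P]
      rw [List.reverse_cons, P_append, hPa, ih, P_cons, Matrix.transpose_mul, hMa]
  rw [K, hP L]
  rfl

end CFSplit

namespace CFSplit

lemma K_append_eq (X Y : List ℕ+) :
    K (X ++ Y) = K X * K Y + P X 0 1 * h Y := by
  show P (X ++ Y) 0 0 = P X 0 0 * P Y 0 0 + P X 0 1 * P Y 1 0
  rw [P_append, Matrix.mul_apply, Fin.sum_univ_two]

lemma P01_le (L : List ℕ+) : P L 0 1 ≤ K L := by
  have main : ∀ L : List ℕ+, P L 0 1 ≤ P L 0 0 ∧ (L ≠ [] → P L 1 1 ≤ P L 1 0) := by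
    intro L
    induction L with
    | nil => refine ⟨?_, fun hh => absurd rfl hh⟩; simp [Matrix.one_apply]
    | cons a t ih =>
      have e01 : P (a :: t) 0 1 = (a : ℕ) * P t 0 1 + P t 1 1 := by
        rw [P_cons, Matrix.mul_apply, Fin.sum_univ_two]; simp [M]
      have e00 : P (a :: t) 0 0 = (a : ℕ) * P t 0 0 + P t 1 0 := by
        rw [P_cons, Matrix.mul_apply, Fin.sum_univ_two]; simp [M]
      have e11 : P (a :: t) 1 1 = P t 0 1 := by
        rw [P_cons, Matrix.mul_apply, Fin.sum_univ_two]; simp [M]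
      have e10 : P (a :: t) 1 0 = P t 0 0 := by
        rw [P_cons, Matrix.mul_apply, Fin.sum_univ_two]; simp [M]
      constructor
      · rw [e01, e00]
        rcases eq_or_ne t [] with rfl | ht
        · have ha : 1 ≤ (a : ℕ) := a.property
          simp [P, Matrix.one_apply]
          omega
        · exact Nat.add_le_add (Nat.mul_le_mul_left _ ih.1) (ih.2 ht)
      · intro _
        rw [e11, e10]; exact ih.1
  exact (main L).1

lemma K_le_cons (a : ℕ+) (t : List ℕ+) : K t ≤ K (a :: t) := by
  rw [K_cons]
  exact le_trans (Nat.le_mul_of_pos_left _ a.property) (Nat.le_add_right _ _)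

lemma add_le_cons (a : ℕ+) (t : List ℕ+) : K t + h t ≤ K (a :: t) := by
  rw [K_cons]
  exact Nat.add_le_add_right (Nat.le_mul_of_pos_left _ a.property) _

lemma two_mul_le_cons (a b : ℕ+) (t : List ℕ+) : 2 * K t ≤ K (a :: b :: t) := by
  calc 2 * K t = K t + K t := by ring
    _ ≤ K (b :: t) + h (b :: t) := by rw [h_cons]; exact Nat.add_le_add_right (K_le_cons b t) _
    _ ≤ K (a :: b :: t) := add_le_cons a _

lemma K_drop_succ_le (B : List ℕ+) (j : ℕ) : K (B.drop (j + 1)) ≤ K (B.drop j) := by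
  rcases lt_or_ge j B.length with hj | hj
  · rw [List.drop_eq_getElem_cons hj]
    exact K_le_cons _ _
  · rw [List.drop_eq_nil_of_le hj, List.drop_eq_nil_of_le (by omega)]

lemma K_drop_mono (B : List ℕ+) {i j : ℕ} (hij : i ≤ j) :
    K (B.drop j) ≤ K (B.drop i) := by
  induction j with
  | zero => simp_all
  | succ j ih =>
    rcases Nat.lt_or_ge i (j + 1) with hlt | hge
    · exact le_trans (K_drop_succ_le B j) (ih (by omega))
    · have : i = j + 1 := by omega
      subst this; rfl

lemma K_drop_two (B : List ℕ+) (j : ℕ) (hj : j + 2 ≤ B.length) :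
    2 * K (B.drop (j + 2)) ≤ K (B.drop j) := by
  have h1 : j < B.length := by omega
  have h2 : j + 1 < B.length := by omega
  rw [List.drop_eq_getElem_cons h1, List.drop_eq_getElem_cons h2]
  exact two_mul_le_cons _ _ _

lemma K_drop_pow (B : List ℕ+) (t : ℕ) :
    ∀ j, j + 2 * t ≤ B.length → 2 ^ t * K (B.drop (j + 2 * t)) ≤ K (B.drop j) := by
  induction t with
  | zero => intro j _; simp
  | succ t ih =>
    intro j hj
    have h1 : j + 2 * (t + 1) = (j + 2) + 2 * t := by ring
    calc 2 ^ (t + 1) * K (B.drop (j + 2 * (t + 1)))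
        = 2 * (2 ^ t * K (B.drop ((j + 2) + 2 * t))) := by rw [h1]; ring
      _ ≤ 2 * K (B.drop (j + 2)) := by
          have := ih (j + 2) (by omega)
          omega
      _ ≤ K (B.drop j) := K_drop_two B j (by omega)

lemma K_take_eq (B : List ℕ+) (i : ℕ) :
    K (B.take i) = K (B.reverse.drop (B.length - i)) := by
  rw [← K_reverse (B.take i), List.reverse_take]

lemma K_take_rev_eq (B : List ℕ+) (i : ℕ) :
    K (B.reverse.take i) = K (B.drop (B.length - i)) := by
  have := K_take_eq B.reverse i
  simpa using this

lemma K_split_le (B : List ℕ+) (i : ℕ) : K (B.take i) * K (B.drop i) ≤ K B := by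
  have := K_append_eq (B.take i) (B.drop i)
  rw [List.take_append_drop] at this
  omega

end CFSplit


open CFSplit

/-- Suppose `b ≥ 2`, `m ≥ 1` and `q(B)/b ≤ m² < q(B)`.  If `B₁` is the longest prefix of `B`
with `q(B₁) ≤ m` (of length `k₁`) and `B₂` is the suffix of `B` such that `B₂*` is the longest
prefix of `B*` with denominator at most `m` (of length `k₂`), then
`−4⌈(1/2)·log₂ b⌉ − 5 ≤ k₁ + k₂ − |B| ≤ 1`. -/
theorem cf_splitter (B : List ℕ+) (b m : ℕ) (hb : 2 ≤ b) (hm : 1 ≤ m)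
    (hupper : qI B B.length ≤ b * m ^ 2) (hlower : m ^ 2 < qI B B.length)
    (k1 k2 : ℕ)
    (hk1 : k1 ≤ B.length ∧ qI B k1 ≤ m ∧ ∀ k ≤ B.length, qI B k ≤ m → k ≤ k1)
    (hk2 : k2 ≤ B.length ∧ qI B.reverse k2 ≤ m ∧
      ∀ k ≤ B.length, qI B.reverse k ≤ m → k ≤ k2) :
    (-4 * ⌈(1 / 2 : ℝ) * Real.logb 2 b⌉ - 5 : ℤ) ≤ (k1 : ℤ) + k2 - B.length ∧
      (k1 : ℤ) + k2 - B.length ≤ 1 := by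
  obtain ⟨hk1n, hq1, hmax1⟩ := hk1
  obtain ⟨hk2n, hq2, hmax2⟩ := hk2
  rw [qI_eq, List.take_length] at hupper hlower
  rw [qI_eq] at hq1 hq2
  rw [K_take_rev_eq] at hq2
  constructor
  · -- lower bound
    set Lc : ℤ := ⌈(1 / 2 : ℝ) * Real.logb 2 b⌉ with hLc
    have hbR : (1 : ℝ) ≤ Real.logb 2 (b : ℝ) := by
      have : Real.logb 2 2 ≤ Real.logb 2 (b : ℝ) := by
        apply Real.logb_le_logb_of_le (by norm_num) (by norm_num)
        exact_mod_cast hb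
      simpa using this
    have hL1 : 1 ≤ Lc := by
      have : (0 : ℝ) < (1 / 2 : ℝ) * Real.logb 2 b := by nlinarith
      exact Int.ceil_pos.mpr this
    set l : ℕ := Lc.toNat with hl
    have hlL : (l : ℤ) = Lc := Int.toNat_of_nonneg (by omega)
    by_contra hcon
    push_neg at hcon
    have hgap : k1 + k2 + 4 * l + 6 ≤ B.length := by omega
    -- maximality gives lower bounds on the next denominators
    have hK1 : m + 1 ≤ K (B.take (k1 + 1)) := by
      by_contra hK
      push_neg at hK
      have := hmax1 (k1 + 1) (by omega) (by rw [qI_eq]; omega)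
      omega
    have hK2 : m + 1 ≤ K (B.drop (B.length - (k2 + 1))) := by
      by_contra hK
      push_neg at hK
      have := hmax2 (k2 + 1) (by omega) (by rw [qI_eq, K_take_rev_eq]; omega)
      omega
    set i : ℕ := k1 + 1 + 2 * l with hi
    -- prefix growth
    have hA : 2 ^ l * (m + 1) ≤ K (B.take i) := by
      rw [K_take_eq]
      have hgrow := K_drop_pow B.reverse l (B.length - i) (by simp; omega)
      have heq : B.length - i + 2 * l = B.length - (k1 + 1) := by omega
      rw [heq] at hgrow
      have h5 : 2 ^ l * (m + 1) ≤ 2 ^ l * K (B.reverse.drop (B.length - (k1 + 1))) := by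
        have he : K (B.reverse.drop (B.length - (k1 + 1))) = K (B.take (k1 + 1)) := by
          rw [K_take_eq]
        rw [he]
        exact Nat.mul_le_mul_left _ hK1
      exact le_trans h5 hgrow
    -- suffix growth
    have hB : 2 ^ l * (m + 1) ≤ K (B.drop i) := by
      have hgrow := K_drop_pow B l (B.length - (k2 + 1) - 2 * l) (by omega)
      have heq : B.length - (k2 + 1) - 2 * l + 2 * l = B.length - (k2 + 1) := by omega
      rw [heq] at hgrow
      have h1 : 2 ^ l * (m + 1) ≤ K (B.drop (B.length - (k2 + 1) - 2 * l)) :=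
        le_trans (Nat.mul_le_mul_left _ hK2) hgrow
      have h2 : K (B.drop (B.length - (k2 + 1) - 2 * l)) ≤ K (B.drop i) := by
        apply K_drop_mono
        omega
      omega
    -- combine
    have hsplit : K (B.take i) * K (B.drop i) ≤ K B := K_split_le B i
    have hbig : 2 ^ l * 2 ^ l * ((m + 1) * (m + 1)) ≤ K B := by
      calc 2 ^ l * 2 ^ l * ((m + 1) * (m + 1))
          = (2 ^ l * (m + 1)) * (2 ^ l * (m + 1)) := by ring
        _ ≤ K (B.take i) * K (B.drop i) := Nat.mul_le_mul hA hB
        _ ≤ K B := hsplit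
    -- b ≤ 2 ^ (2 * l)
    have hble : b ≤ 2 ^ l * 2 ^ l := by
      have hceil : (1 / 2 : ℝ) * Real.logb 2 b ≤ (Lc : ℝ) := Int.le_ceil _
      have hlog : Real.logb 2 (b : ℝ) ≤ (2 * l : ℕ) := by
        push_cast
        have hcast : (l : ℝ) = (Lc : ℝ) := by exact_mod_cast hlL
        linarith
      have hbpos : (0 : ℝ) < (b : ℝ) := by positivity
      have h1 : (b : ℝ) = (2 : ℝ) ^ (Real.logb 2 (b : ℝ)) :=
        (Real.rpow_logb (by norm_num) (by norm_num) hbpos).symm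
      have h2 : (b : ℝ) ≤ (2 : ℝ) ^ ((2 * l : ℕ) : ℝ) := by
        rw [h1]
        exact Real.rpow_le_rpow_of_exponent_le (by norm_num) hlog
      rw [Real.rpow_natCast] at h2
      have h3 : (b : ℝ) ≤ ((2 ^ (2 * l) : ℕ) : ℝ) := by push_cast at h2 ⊢; linarith
      have h4 : b ≤ 2 ^ (2 * l) := by exact_mod_cast h3
      calc b ≤ 2 ^ (2 * l) := h4
        _ = 2 ^ l * 2 ^ l := by rw [← pow_add]; ring_nf
    have hfin : K B ≤ 2 ^ l * 2 ^ l * m ^ 2 :=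
      le_trans hupper (Nat.mul_le_mul_right _ hble)
    have hpowpos : 0 < 2 ^ l * 2 ^ l := by positivity
    have hle : 2 ^ l * 2 ^ l * ((m + 1) * (m + 1)) ≤ 2 ^ l * 2 ^ l * m ^ 2 :=
      le_trans hbig hfin
    have hmm := Nat.le_of_mul_le_mul_left hle hpowpos
    rw [pow_two] at hmm
    nlinarith [hmm]
  · -- upper bound
    by_contra hcon
    push_neg at hcon
    have hsum : B.length + 2 ≤ k1 + k2 := by omega
    have h2k1 : 2 ≤ k1 := by omega
    have hid := K_append_eq (B.take k1) (B.drop k1)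
    rw [List.take_append_drop] at hid
    have hc : P (B.take k1) 0 1 ≤ K (B.take k1) := P01_le _
    have hstep : K (B.drop k1) + h (B.drop k1) ≤ K (B.drop (k1 - 1)) := by
      have hlt : k1 - 1 < B.length := by omega
      rw [List.drop_eq_getElem_cons hlt]
      have : k1 - 1 + 1 = k1 := by omega
      rw [this]
      exact add_le_cons _ _
    have hmono : K (B.drop (k1 - 1)) ≤ K (B.drop (B.length - k2)) :=
      K_drop_mono B (by omega)
    have : K B ≤ m * m := by
      calc K B = K (B.take k1) * K (B.drop k1) + P (B.take k1) 0 1 * h (B.drop k1) := hid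
        _ ≤ K (B.take k1) * K (B.drop k1) + K (B.take k1) * h (B.drop k1) :=
            Nat.add_le_add_left (Nat.mul_le_mul_right _ hc) _
        _ = K (B.take k1) * (K (B.drop k1) + h (B.drop k1)) := by ring
        _ ≤ m * K (B.drop (B.length - k2)) :=
            Nat.mul_le_mul hq1 (le_trans hstep hmono)
        _ ≤ m * m := Nat.mul_le_mul_left _ hq2
    rw [pow_two] at hlower
    omega
end

section
/- Let U be a subset of the Farey sequence F_m, and for P/Q ∈ U let P'/Q' be its successor in F_m. Then the Lebesgue measure of the union over P/Q ∈ U of the intervals [P/Q, P'/Q'] is at most C·√(#U)/m for a universal constant C. -/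
open MeasureTheory

/-- The Farey set `F_m`: rationals in `[0,1]` with denominator (in lowest terms) at most `m`. -/
def Farey (m : ℕ) : Set ℚ := {x | 0 ≤ x ∧ x ≤ 1 ∧ x.den ≤ m}

/-!
If `x = p / q < y` are consecutive in `F_m`, shifting a Bézout relation gives the solution of
`q a - p b = 1` with `m - q < b ≤ m`; no fraction of denominator `≤ m` lies strictly between `x` and
`a / b`, so `y = a / b` and `y - x = 1 / (q b)` with `q + b > m`, whence
`y - x ≤ 2 / (m · min(q, b))`. As the successor map is injective and `[0, 1]` contains at most
`j + 1` fractions of denominator `j`, at most `2 (j + 1)` points of `U` have minimal neighbour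
denominator `j`. Summing `1 / j` over `U`, each level `j ≤ √#U` contributes `O(1)` and every other
point at most `1 / √#U`, so the total is `O(√#U)`.
-/

open Finset

theorem volume_biUnion_Icc_toReal_le {ι : Type*} (U : Finset ι) (a b : ι → ℝ)
    (hab : ∀ i ∈ U, a i ≤ b i) :
    (volume (⋃ i ∈ U, Set.Icc (a i) (b i))).toReal ≤ ∑ i ∈ U, (b i - a i) := by
  have hlen : ∀ i ∈ U, 0 ≤ b i - a i := fun i hi => sub_nonneg.2 (hab i hi)
  refine ENNReal.toReal_le_of_le_ofReal (sum_nonneg hlen) ?_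
  rw [ENNReal.ofReal_sum_of_nonneg hlen]
  refine (measure_biUnion_finset_le U _).trans (sum_le_sum fun i _ => ?_)
  rw [Real.volume_Icc]

theorem StrictMonoOn.of_lt_of_notMem_Ioo {α : Type*} [LinearOrder α] {s : Set α} {f : α → α}
    (hlt : ∀ x ∈ s, x < f x) (hgap : ∀ x ∈ s, ∀ y ∈ s, y ∉ Set.Ioo x (f x)) :
    StrictMonoOn f s := fun x hx y hy hxy =>
  (not_lt.1 fun hyf => hgap x hx y hy ⟨hxy, hyf⟩).trans_lt (hlt y hy)

theorem Rat.card_le_succ_of_den_eq {S : Finset ℚ} {j : ℕ} (hS : ↑S ⊆ Set.Icc (0 : ℚ) 1)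
    (hden : ∀ x ∈ S, x.den = j) : #S ≤ j + 1 := by
  have hmaps : Set.MapsTo Rat.num S (Icc 0 (j : ℤ)) := fun x hx => by
    obtain ⟨h0, h1⟩ := hS hx
    rw [coe_Icc, Set.mem_Icc, Rat.num_nonneg, ← hden x hx]
    exact ⟨h0, Rat.num_le_denom_iff.2 h1⟩
  have hinj : Set.InjOn Rat.num S := fun x hx y hy h =>
    Rat.ext h ((hden x hx).trans (hden y hy).symm)
  simpa using card_le_card_of_injOn Rat.num hmaps hinj

theorem card_filter_min_den_eq_le {U : Finset ℚ} {f : ℚ → ℚ} (hU : ↑U ⊆ Set.Icc (0 : ℚ) 1)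
    (hf : Set.MapsTo f U (Set.Icc 0 1)) (hinj : Set.InjOn f U) (j : ℕ) :
    #{x ∈ U | min x.den (f x).den = j} ≤ 2 * (j + 1) := by
  have hsub : {x ∈ U | min x.den (f x).den = j} ⊆
      {x ∈ U | x.den = j} ∪ {x ∈ U | (f x).den = j} := fun x hx => by
    simp only [mem_filter, mem_union] at hx ⊢
    rcases min_choice x.den (f x).den with h | h <;> [left; right] <;> exact ⟨hx.1, h ▸ hx.2⟩
  have hleft : #{x ∈ U | x.den = j} ≤ j + 1 :=
    Rat.card_le_succ_of_den_eq ((coe_subset.2 (filter_subset _ _)).trans hU) fun _ hx =>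
      (mem_filter.1 hx).2
  have hright : #{x ∈ U | (f x).den = j} ≤ j + 1 := by
    rw [← card_image_of_injOn (hinj.mono (coe_subset.2 (filter_subset _ _)))]
    refine Rat.card_le_succ_of_den_eq ?_ ?_
    · simp only [coe_image]
      exact (Set.image_mono (coe_subset.2 (filter_subset _ _))).trans hf.image_subset
    · simp only [mem_image, mem_filter]
      rintro _ ⟨x, ⟨-, hx⟩, rfl⟩
      exact hx
  calc _ ≤ _ := card_le_card hsub
    _ ≤ _ := card_union_le _ _
    _ ≤ 2 * (j + 1) := by omega

theorem exists_mul_sub_mul_eq_one {p q : ℤ} (hpq : IsCoprime p q) (hq : 0 < q) (m : ℤ) :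
    ∃ a b : ℤ, q * a - p * b = 1 ∧ m - q < b ∧ b ≤ m := by
  obtain ⟨u, v, huv⟩ := hpq
  refine ⟨v + p * ((m + u) / q), m - (m + u) % q, ?_, ?_, ?_⟩
  · have := Int.emod_add_mul_ediv (m + u) q
    linear_combination huv + p * this
  · linarith [Int.emod_lt_of_pos (m + u) hq]
  · linarith [Int.emod_nonneg (m + u) hq.ne']

theorem Rat.add_le_den_of_lt_of_lt {p q a b : ℤ} (hq : 0 < q) (hb : 0 < b)
    (hab : q * a - p * b = 1) {w : ℚ} (hpw : (p / q : ℚ) < w) (hwa : w < (a / b : ℚ)) :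
    q + b ≤ w.den := by
  have hd : (0 : ℚ) < w.den := by exact_mod_cast w.pos
  rw [← Rat.num_div_den w, div_lt_div_iff₀ (by exact_mod_cast hq) hd] at hpw
  rw [← Rat.num_div_den w, div_lt_div_iff₀ hd (by exact_mod_cast hb)] at hwa
  have hpw' : p * w.den < w.num * q := by exact_mod_cast hpw
  have hwa' : w.num * b < a * w.den := by exact_mod_cast hwa
  -- `w.den = b (q w.num - p w.den) + q (a w.den - b w.num)`, a sum of two positive multiples
  nlinarith

theorem Farey.exists_sub_eq_of_consecutive {m : ℕ} {x y : ℚ} (hx : x ∈ Farey m)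
    (hy : y ∈ Farey m) (hxy : x < y) (hno : ∀ r ∈ Farey m, ¬(x < r ∧ r < y)) :
    ∃ b : ℤ, y.den ≤ b ∧ (m : ℤ) < x.den + b ∧ y - x = 1 / (x.den * b) := by
  obtain ⟨a, b, hab, hmb, hbm⟩ :=
    exists_mul_sub_mul_eq_one (Rat.isCoprime_num_den x) (by exact_mod_cast x.pos) m
  have hb : 0 < b := by linarith [show (x.den : ℤ) ≤ m by exact_mod_cast hx.2.2]
  have hb' : (0 : ℚ) < b := by exact_mod_cast hb
  have hzx : (a / b : ℚ) - x = 1 / (x.den * b) := by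
    have habQ : (x.den * a - x.num * b : ℚ) = 1 := by exact_mod_cast hab
    rw [← Rat.mul_den_eq_num] at habQ
    field_simp
    linear_combination habQ
  have hxz : x < a / b := by
    rw [← sub_pos, hzx]
    positivity
  have hzden : ((a / b : ℚ).den : ℤ) ≤ b := by
    rw [← Rat.divInt_eq_div]
    exact Int.le_of_dvd hb (Rat.den_dvd a b)
  have hyz : y = a / b := by
    rcases lt_trichotomy y (a / b) with hlt | heq | hgt
    · have := Rat.add_le_den_of_lt_of_lt (p := x.num) (by exact_mod_cast x.pos) hb hab
        (by rwa [Int.cast_natCast, Rat.num_div_den]) hlt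
      linarith [show (y.den : ℤ) ≤ m by exact_mod_cast hy.2.2]
    · exact heq
    · refine (hno _ ⟨hx.1.trans hxz.le, hgt.le.trans hy.2.1, ?_⟩ ⟨hxz, hgt⟩).elim
      exact_mod_cast hzden.trans hbm
  exact ⟨b, hyz ▸ hzden, by linarith, hyz ▸ hzx⟩

theorem Farey.sub_le_of_consecutive {m : ℕ} {x y : ℚ} (hx : x ∈ Farey m) (hy : y ∈ Farey m)
    (hxy : x < y) (hno : ∀ r ∈ Farey m, ¬(x < r ∧ r < y)) :
    y - x ≤ 2 / (m * (min x.den y.den : ℕ)) := by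
  obtain ⟨b, hyb, hmb, hyx⟩ := Farey.exists_sub_eq_of_consecutive hx hy hxy hno
  have hμq : ((min x.den y.den : ℕ) : ℚ) ≤ x.den := by exact_mod_cast min_le_left _ _
  have hμb : ((min x.den y.den : ℕ) : ℚ) ≤ b := by
    have : ((min x.den y.den : ℕ) : ℤ) ≤ b := (Nat.cast_le.2 (min_le_right _ _)).trans hyb
    exact_mod_cast this
  have hμ : (0 : ℚ) < (min x.den y.den : ℕ) := by exact_mod_cast lt_min x.pos y.pos
  have hmb' : (m : ℚ) < x.den + b := by exact_mod_cast hmb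
  have hq : (0 : ℚ) < x.den := by exact_mod_cast x.pos
  have hm : (0 : ℚ) < m := by exact_mod_cast x.pos.trans_le hx.2.2
  rw [hyx, div_le_div_iff₀ (by nlinarith) (by positivity)]
  -- m μ < (q + b) μ ≤ q b + b q
  nlinarith [mul_le_mul_of_nonneg_left hμb hq.le, mul_le_mul_of_nonneg_left hμq (hμ.le.trans hμb)]

section FiberSum

variable {α : Type*} (U : Finset α) (g : α → ℕ) (c : ℕ)

theorem sum_inv_filter_le_of_card_fiber_le (hg : ∀ x ∈ U, 0 < g x)
    (hfib : ∀ j, #{x ∈ U | g x = j} ≤ c * (j + 1)) (K : ℕ) :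
    ∑ x ∈ U with g x ≤ K, (g x : ℝ)⁻¹ ≤ 2 * c * K := by
  have hmaps : ∀ x ∈ {x ∈ U | g x ≤ K}, g x ∈ Icc 1 K := fun x hx => by
    rw [mem_filter] at hx
    exact mem_Icc.2 ⟨hg x hx.1, hx.2⟩
  rw [← sum_fiberwise_of_maps_to hmaps]
  calc ∑ j ∈ Icc 1 K, ∑ x ∈ {x ∈ U | g x ≤ K} with g x = j, (g x : ℝ)⁻¹
      ≤ ∑ j ∈ Icc 1 K, (2 * c : ℝ) := sum_le_sum fun j hj => ?_
    _ = 2 * c * K := by rw [sum_const, Nat.card_Icc, Nat.add_sub_cancel, nsmul_eq_mul, mul_comm]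
  have hj : (1 : ℝ) ≤ j := by exact_mod_cast (mem_Icc.1 hj).1
  have hcard : (#{x ∈ U | g x ≤ K ∧ g x = j} : ℝ) ≤ c * (j + 1) := by
    exact_mod_cast
      (card_le_card (monotone_filter_right U fun _ _ (h : _ ∧ _) => h.2)).trans (hfib j)
  rw [sum_congr rfl fun x hx => by rw [(mem_filter.1 hx).2], sum_const, nsmul_eq_mul,
    filter_filter]
  calc _ ≤ c * (j + 1) * (j : ℝ)⁻¹ := by gcongr
    _ ≤ 2 * c := by
      rw [← div_eq_mul_inv, div_le_iff₀ (by positivity)]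
      nlinarith [(Nat.cast_nonneg c : (0 : ℝ) ≤ c)]

theorem sum_inv_le_of_card_fiber_le (hg : ∀ x ∈ U, 0 < g x)
    (hfib : ∀ j, #{x ∈ U | g x = j} ≤ c * (j + 1)) :
    ∑ x ∈ U, (g x : ℝ)⁻¹ ≤ (4 * c + 1) * √(#U : ℝ) := by
  rcases U.eq_empty_or_nonempty with rfl | hU
  · simp
  set s := √(#U : ℝ)
  set K := Nat.sqrt #U + 1
  have hs1 : 1 ≤ s := Real.one_le_sqrt.2 (by exact_mod_cast hU.card_pos)
  have hsK : s ≤ K := by push_cast [K]; exact Real.real_sqrt_le_nat_sqrt_succ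
  have hKs : (K : ℝ) ≤ s + 1 := by push_cast [K]; linarith [Real.nat_sqrt_le_real_sqrt (a := #U)]
  have hlow := sum_inv_filter_le_of_card_fiber_le U g c hg hfib K
  have hhigh : ∑ x ∈ U with ¬g x ≤ K, (g x : ℝ)⁻¹ ≤ s :=
    calc _ ≤ ∑ x ∈ U with ¬g x ≤ K, (K : ℝ)⁻¹ := sum_le_sum fun x hx => by
          have : (K : ℝ) ≤ g x := by exact_mod_cast (not_le.1 (mem_filter.1 hx).2).le
          gcongr
      _ ≤ #U * (K : ℝ)⁻¹ := by
          rw [sum_const, nsmul_eq_mul]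
          gcongr
          exact filter_subset _ _
      _ ≤ s := by
          rw [← div_eq_mul_inv, div_le_iff₀ (by linarith), ← Real.mul_self_sqrt (#U).cast_nonneg]
          gcongr
  rw [← sum_filter_add_sum_filter_not U (g · ≤ K)]
  have hc : (0 : ℝ) ≤ c := c.cast_nonneg
  nlinarith [mul_le_mul_of_nonneg_left hKs hc, mul_le_mul_of_nonneg_left hs1 hc]

end FiberSum

/-- There is a universal constant `C` such that for any `m`, any `U ⊆ F_m`, and successors
`succ x` in `F_m`, the Lebesgue measure of `⋃_{x ∈ U} [x, succ x]` is at most `C·√(#U)/m`. -/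
theorem farey_union_measure_bound :
    ∃ C : ℝ, 0 < C ∧ ∀ (m : ℕ), 0 < m → ∀ (U : Finset ℚ), ↑U ⊆ Farey m →
      ∀ succ : ℚ → ℚ, (∀ x ∈ U, succ x ∈ Farey m ∧ x < succ x ∧
        ∀ r ∈ Farey m, ¬(x < r ∧ r < succ x)) →
      (volume (⋃ x ∈ U, Set.Icc (x : ℝ) ((succ x : ℚ) : ℝ))).toReal
        ≤ C * Real.sqrt U.card / m := by
  refine ⟨18, by norm_num, fun m _ U hU succ hsucc => ?_⟩
  have hUI : ↑U ⊆ Set.Icc (0 : ℚ) 1 := fun x hx => ⟨(hU hx).1, (hU hx).2.1⟩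
  have hmono : StrictMonoOn succ U := .of_lt_of_notMem_Ioo (fun x hx => (hsucc x hx).2.1)
    fun x hx y hy => (hsucc x hx).2.2 y (hU hy)
  have hfib (j : ℕ) : #{x ∈ U | min x.den (succ x).den = j} ≤ 2 * (j + 1) :=
    card_filter_min_den_eq_le hUI (fun x hx => ⟨(hsucc x hx).1.1, (hsucc x hx).1.2.1⟩)
      hmono.injOn j
  have hgap : ∀ x ∈ U,
      ((succ x : ℚ) : ℝ) - x ≤ 2 / m * ((min x.den (succ x).den : ℕ) : ℝ)⁻¹ := by
    intro x hx
    obtain ⟨hsF, hxs, hno⟩ := hsucc x hx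
    have := (Rat.cast_le (K := ℝ)).2 (Farey.sub_le_of_consecutive (hU hx) hsF hxs hno)
    push_cast at this
    rwa [← div_eq_mul_inv, div_div, Nat.cast_min]
  calc _ ≤ ∑ x ∈ U, (((succ x : ℚ) : ℝ) - x) :=
        volume_biUnion_Icc_toReal_le U _ _ fun x hx => by exact_mod_cast (hsucc x hx).2.1.le
    _ ≤ ∑ x ∈ U, 2 / m * ((min x.den (succ x).den : ℕ) : ℝ)⁻¹ := sum_le_sum hgap
    _ = 2 / m * ∑ x ∈ U, ((min x.den (succ x).den : ℕ) : ℝ)⁻¹ := (mul_sum _ _ _).symm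
    _ ≤ 2 / m * ((4 * 2 + 1) * √(#U : ℝ)) := by
        gcongr
        exact sum_inv_le_of_card_fiber_le U _ 2 (fun x _ => lt_min x.pos (succ x).pos) hfib
    _ = 18 * √(#U : ℝ) / m := by ring
end

section
/- Let b ≥ 2, and suppose a finite word w over the alphabet {0,...,b−1} is (ε,k)-normal, i.e., (ε,u)-normal for every word u of length k with respect to m(u) = b^{−k}. Then for every 1 ≤ ℓ < k and every word u of length ℓ, w is (ε', ℓ)-normal where ε' = 2k/(|w| − k + 1) + b^k·ε. -/
/-- `occCount u w`: the number of occurrences of `u` as a contiguous subword of `w`. -/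
def occCount {α : Type*} [DecidableEq α] (u w : List α) : ℕ :=
  ((Finset.range (w.length + 1)).filter (fun i => (w.drop i).take u.length = u)).card

/-!
Every occurrence of `u` (of length `ℓ`) starting at least `k` letters before the end of `w`
extends uniquely to an occurrence of some `u ++ x` with `|x| = k - ℓ`, and at most `k - ℓ`
occurrences of `u` start later. So `ν_u(w)` differs by at most `k - ℓ` from the sum of the
`b^(k-ℓ)` counts `ν_{u++x}(w)`; normality of each extension pins that sum, divided by
`|w| - k + 1`, to `b^(-ℓ)` up to `b^(k-ℓ) ε`, and passing to the normalisation `|w| - ℓ + 1`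
costs at most `(k - ℓ)/(|w| - k + 1)`.
-/

open Finset

section Words

variable {α : Type*}

def wordsOfLength (α : Type*) [Fintype α] (m : ℕ) : Finset (List α) :=
  univ.map ⟨List.ofFn, List.ofFn_injective (n := m)⟩

@[simp]
lemma mem_wordsOfLength [Fintype α] {m : ℕ} {x : List α} :
    x ∈ wordsOfLength α m ↔ x.length = m := by
  refine ⟨fun hx => ?_, fun hx => ?_⟩
  · obtain ⟨g, -, rfl⟩ := mem_map.1 hx
    exact List.length_ofFn
  · subst hx
    exact mem_map.2 ⟨x.get, mem_univ _, List.ofFn_get x⟩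

lemma card_wordsOfLength [Fintype α] (m : ℕ) :
    #(wordsOfLength α m) = Fintype.card α ^ m := by
  rw [wordsOfLength, card_map, card_univ, Fintype.card_fun, Fintype.card_fin]

lemma length_le_of_take_drop_eq {w u : List α} {i : ℕ} (h : (w.drop i).take u.length = u) :
    u.length ≤ w.length - i := by
  simpa using (congrArg List.length h).symm.trans_le (List.length_take_le' _ _)

lemma take_drop_eq_append_iff (w u x : List α) (i : ℕ) :
    (w.drop i).take (u ++ x).length = u ++ x ↔
      (w.drop i).take u.length = u ∧ (w.drop (i + u.length)).take x.length = x := by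
  rw [List.length_append, List.take_add, List.drop_drop]
  refine ⟨fun h => List.append_inj h ?_, fun ⟨hu, hx⟩ => by rw [hu, hx]⟩
  have := congrArg List.length h
  simp only [List.length_append, List.length_take, List.length_drop] at this ⊢
  omega

variable [DecidableEq α]

lemma occCount_le (u w : List α) : occCount u w ≤ w.length + 1 - u.length := by
  refine (card_le_card fun i hi => ?_).trans (card_range _).le
  rw [mem_filter, mem_range] at hi
  have := length_le_of_take_drop_eq hi.2
  rw [mem_range]; omega

lemma sum_occCount_append [Fintype α] (u w : List α) (m : ℕ) :
    ∑ x ∈ wordsOfLength α m, occCount (u ++ x) w =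
      #{i ∈ range (w.length + 1) |
        (w.drop i).take u.length = u ∧ i + u.length + m ≤ w.length} := by
  rw [card_eq_sum_card_fiberwise (f := fun i : ℕ => (w.drop (i + u.length)).take m)
    (s := {i ∈ range (w.length + 1) |
      (w.drop i).take u.length = u ∧ i + u.length + m ≤ w.length})
    (t := wordsOfLength α m)]
  · refine sum_congr rfl fun x hx => ?_
    rw [mem_wordsOfLength] at hx
    rw [occCount, filter_filter]
    congr 1
    refine filter_congr fun i hi => ?_
    rw [take_drop_eq_append_iff, hx]
    constructor
    · rintro ⟨hu, hx'⟩
      refine ⟨⟨hu, ?_⟩, hx'⟩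
      have hroom := length_le_of_take_drop_eq hu
      have hlen := congrArg List.length hx'
      simp only [List.length_take, List.length_drop, hx] at hlen
      rw [mem_range] at hi
      omega
    · rintro ⟨⟨hu, -⟩, hx'⟩
      exact ⟨hu, hx'⟩
  · intro i hi
    simp only [coe_filter, Set.mem_ofPred_eq] at hi
    simp only [SetLike.mem_coe, mem_wordsOfLength, List.length_take, List.length_drop,
      inf_eq_left]
    omega

lemma occCount_le_sum_occCount_append_add [Fintype α] (u w : List α) (m : ℕ) :
    occCount u w ≤ ∑ x ∈ wordsOfLength α m, occCount (u ++ x) w + m := by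
  rw [sum_occCount_append, occCount, ← filter_filter,
    ← card_filter_add_card_filter_not (fun i => i + u.length + m ≤ w.length)]
  gcongr
  refine (card_le_card (t := Ico (w.length + 1 - u.length - m) (w.length + 1 - u.length))
    fun i hi => ?_).trans (by rw [Nat.card_Ico]; omega)
  simp only [mem_filter, mem_range] at hi
  have := length_le_of_take_drop_eq hi.1.2
  rw [mem_Ico]; omega

lemma sum_occCount_append_le_occCount [Fintype α] (u w : List α) (m : ℕ) :
    ∑ x ∈ wordsOfLength α m, occCount (u ++ x) w ≤ occCount u w := by
  rw [sum_occCount_append, occCount, ← filter_filter]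
  exact card_le_card (filter_subset _ _)

end Words

lemma abs_div_sub_div_le {K : Type*} [Field K] [LinearOrder K] [IsStrictOrderedRing K]
    {a s d₁ d₂ : K} (hd₂ : 0 < d₂) (hd : d₂ ≤ d₁) (ha : 0 ≤ a) (ha₁ : a ≤ d₁)
    (hsa : s ≤ a) (has : a ≤ s + (d₁ - d₂)) :
    |a / d₁ - s / d₂| ≤ (d₁ - d₂) / d₂ := by
  have hd₁ : 0 < d₁ := hd₂.trans_le hd
  have key : a / d₁ - s / d₂ = (a - s) / d₂ - a / d₁ * ((d₁ - d₂) / d₂) := by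
    field_simp; ring
  rw [key]
  refine abs_sub_le_of_nonneg_of_le (by bound)
    (div_le_div_of_nonneg_right (by linarith) hd₂.le) (by bound) ?_
  exact mul_le_of_le_one_left (by bound) ((div_le_one hd₁).2 ha₁)

lemma abs_sum_sub_card_smul_le {ι K : Type*} [Field K] [LinearOrder K] [IsStrictOrderedRing K]
    {s : Finset ι} {f : ι → K} {c ε : K} (h : ∀ i ∈ s, |f i - c| ≤ ε) :
    |∑ i ∈ s, f i - #s • c| ≤ #s • ε := by
  rw [← sum_const, ← sum_sub_distrib]
  exact (abs_sum_le_sum_abs _ _).trans (sum_le_card_nsmul _ _ _ h)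

/-- If a word `w` over the alphabet `{0,…,b−1}` is `(ε,k)`-normal (i.e. `(ε,u)`-normal for all
`u` of length `k`, with expected frequency `b^{−k}`), then for every `1 ≤ ℓ < k` and every `u`
of length `ℓ`, `w` is `(ε',ℓ)`-normal with `ε' = 2k/(|w| − k + 1) + b^k·ε`. -/
theorem eps_k_normal_implies_shorter (b : ℕ) (hb : 2 ≤ b) (ε : ℝ) (hε : 0 ≤ ε)
    (k : ℕ) (w : List (Fin b)) (hkw : k ≤ w.length)
    (hnorm : ∀ u : List (Fin b), u.length = k →
      |((occCount u w : ℝ)) / ((w.length : ℝ) - (k : ℝ) + 1) - ((b : ℝ) ^ k)⁻¹| ≤ ε) :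
    ∀ ℓ, 1 ≤ ℓ → ℓ < k → ∀ u : List (Fin b), u.length = ℓ →
      |((occCount u w : ℝ)) / ((w.length : ℝ) - (ℓ : ℝ) + 1) - ((b : ℝ) ^ ℓ)⁻¹| ≤
        2 * (k : ℝ) / ((w.length : ℝ) - (k : ℝ) + 1) + (b : ℝ) ^ k * ε := by
  intro ℓ _ hℓk u hu
  obtain ⟨m, rfl⟩ : ∃ m, k = ℓ + m := ⟨k - ℓ, by omega⟩
  set D := (w.length : ℝ) - ((ℓ + m : ℕ) : ℝ) + 1
  set S := ∑ x ∈ wordsOfLength (Fin b) m, occCount (u ++ x) w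
  have hD : 0 < D := by
    have : ((ℓ + m : ℕ) : ℝ) ≤ w.length := by exact_mod_cast hkw
    linarith
  have hext : |(S : ℝ) / D - ((b : ℝ) ^ ℓ)⁻¹| ≤ (b : ℝ) ^ m * ε := by
    have hmass : ((b ^ m : ℕ) : ℝ) * ((b : ℝ) ^ (ℓ + m))⁻¹ = ((b : ℝ) ^ ℓ)⁻¹ := by
      have : (b : ℝ) ≠ 0 := Nat.cast_ne_zero.2 (by omega)
      rw [pow_add, Nat.cast_pow]
      field_simp
    have := abs_sum_sub_card_smul_le (c := ((b : ℝ) ^ (ℓ + m))⁻¹) (ε := ε)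
      fun x hx => hnorm (u ++ x) (by rw [List.length_append, hu, (mem_wordsOfLength.1 hx)])
    rwa [card_wordsOfLength, Fintype.card_fin, nsmul_eq_mul, nsmul_eq_mul, hmass, ← sum_div,
      ← Nat.cast_sum, Nat.cast_pow] at this
  have hocc : |(occCount u w : ℝ) / (w.length - ℓ + 1) - S / D| ≤ m / D := by
    have hgap : (w.length - ℓ + 1 : ℝ) - D = m := by push_cast [D]; ring
    have hroom : (occCount u w : ℝ) ≤ w.length - ℓ + 1 := by
      calc (occCount u w : ℝ) ≤ ((w.length + 1 - ℓ : ℕ) : ℝ) := by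
            exact_mod_cast hu ▸ occCount_le u w
        _ = w.length - ℓ + 1 := by rw [Nat.cast_sub (by omega)]; push_cast; ring
    have hsum : (S : ℝ) ≤ occCount u w := by
      exact_mod_cast sum_occCount_append_le_occCount u w m
    have hbdry : (occCount u w : ℝ) ≤ S + m := by
      exact_mod_cast occCount_le_sum_occCount_append_add u w m
    rw [← hgap]
    exact abs_div_sub_div_le hD (by linarith) (Nat.cast_nonneg _) hroom hsum (by linarith)
  calc _ ≤ |(occCount u w : ℝ) / (w.length - ℓ + 1) - S / D|
          + |(S : ℝ) / D - ((b : ℝ) ^ ℓ)⁻¹| := abs_sub_le _ _ _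
    _ ≤ m / D + (b : ℝ) ^ m * ε := add_le_add hocc hext
    _ ≤ 2 * ((ℓ + m : ℕ) : ℝ) / D + (b : ℝ) ^ (ℓ + m) * ε := by
        gcongr
        · push_cast; linarith
        · exact_mod_cast hb.trans' one_le_two
        · omega
end
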